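/- arXiv:1804.06746 — 3 statements merged into one kernel-verified Lean document; each statement's English description precedes it below -/
import Mathlib

section
/- Let P be a symmetric positive definite n×n real matrix with maximal eigenvalue λ. The function γ(θ) = -log det(I - θP) + tr((I - θP)^{-1} - I) is strictly monotone increasing on the interval (0, 1/λ). -/
/-!
Diagonalising `P` with eigenvalues `μᵢ`, one gets `γ(θ) = ∑ᵢ φ(1 - θ μᵢ) - n` with
`φ x = -log x + x⁻¹`. For `θ ∈ (0, 1/λ)` every `1 - θ μᵢ` is positive and strictly decreasing
in `θ` (as `μᵢ > 0`), while `φ` is strictly decreasing on `(0, ∞)`.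
-/

open Matrix Unitary

lemma Real.strictAntiOn_neg_log_add_inv : StrictAntiOn (fun x => -Real.log x + x⁻¹) (Set.Ioi 0) :=
  Real.strictMonoOn_log.neg.add strictAntiOn_inv_pos

namespace Matrix.IsHermitian

variable {n : Type*} [Fintype n] [DecidableEq n]

section RCLike

variable {𝕜 : Type*} [RCLike 𝕜] {A : Matrix n n 𝕜} (hA : A.IsHermitian)

lemma det_cfc (f : ℝ → ℝ) : (hA.cfc f).det = ∏ i, (f (hA.eigenvalues i) : 𝕜) := by
  rw [IsHermitian.cfc, conjStarAlgAut_apply, det_mul_right_comm,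
    mul_star_self_of_mem hA.eigenvectorUnitary.prop, one_mul, det_diagonal]
  rfl

lemma trace_cfc (f : ℝ → ℝ) : (hA.cfc f).trace = ∑ i, (f (hA.eigenvalues i) : 𝕜) := by
  rw [IsHermitian.cfc, conjStarAlgAut_apply, trace_mul_cycle,
    star_mul_self_of_mem hA.eigenvectorUnitary.prop, one_mul, trace_diagonal]
  rfl

lemma inv_cfc {f : ℝ → ℝ} (hf : ∀ i, f (hA.eigenvalues i) ≠ 0) :
    (hA.cfc f)⁻¹ = hA.cfc f⁻¹ := by
  refine inv_eq_left_inv ?_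
  rw [IsHermitian.cfc, IsHermitian.cfc, ← map_mul, diagonal_mul_diagonal,
    ← map_one (conjStarAlgAut 𝕜 _ hA.eigenvectorUnitary), ← diagonal_one]
  congr 2
  ext i
  simp [hf i]

lemma one_sub_smul_eq_cfc (θ : ℝ) : 1 - θ • A = hA.cfc (fun x => 1 - θ * x) := by
  rw [← hA.cfc_eq, cfc_sub .., cfc_const_one .., cfc_const_mul_id ..]

end RCLike

lemma neg_log_det_one_sub_smul_add_trace_inv_sub_one {A : Matrix n n ℝ} (hA : A.IsHermitian)
    {θ : ℝ} (hθ : ∀ i, 1 - θ * hA.eigenvalues i ≠ 0) :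
    -Real.log (1 - θ • A).det + ((1 - θ • A)⁻¹ - 1).trace =
      ∑ i, (-Real.log (1 - θ * hA.eigenvalues i) + (1 - θ * hA.eigenvalues i)⁻¹) -
        Fintype.card n := by
  rw [hA.one_sub_smul_eq_cfc, hA.inv_cfc hθ, trace_sub, hA.det_cfc, hA.trace_cfc, trace_one]
  simp only [RCLike.ofReal_real_eq_id, id, Pi.inv_apply]
  rw [Real.log_prod fun i _ => hθ i, Finset.sum_add_distrib, Finset.sum_neg_distrib]
  ring

end Matrix.IsHermitian

/-- γ(θ) = -log det(I - θP) + tr((I - θP)⁻¹ - I) is strictly monotone increasing on (0, 1/λ). -/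
theorem stmt_1 {n : ℕ} (P : Matrix (Fin n) (Fin n) ℝ) (hP : P.PosDef)
    (lam : ℝ) (hlam : IsGreatest (Set.range hP.1.eigenvalues) lam) :
    StrictMonoOn
      (fun θ : ℝ => -Real.log ((1 - θ • P).det) + Matrix.trace ((1 - θ • P)⁻¹ - 1))
      (Set.Ioo 0 (1 / lam)) := by
  obtain ⟨i₀, hi₀⟩ := hlam.1
  have hlam_pos : 0 < lam := hi₀ ▸ hP.eigenvalues_pos i₀
  have hpos : ∀ θ ∈ Set.Ioo 0 (1 / lam), ∀ i, 0 < 1 - θ * hP.1.eigenvalues i := by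
    intro θ ⟨hθ₀, hθ⟩ i
    have hθlam : θ * lam < 1 := (lt_div_iff₀ hlam_pos).mp hθ
    nlinarith [hlam.2 ⟨i, rfl⟩]
  intro a ha b hb hab
  simp only [hP.1.neg_log_det_one_sub_smul_add_trace_inv_sub_one fun i => (hpos a ha i).ne',
    hP.1.neg_log_det_one_sub_smul_add_trace_inv_sub_one fun i => (hpos b hb i).ne']
  refine sub_lt_sub_right (Finset.sum_lt_sum_of_nonempty ⟨i₀, Finset.mem_univ _⟩ fun i _ => ?_) _
  refine Real.strictAntiOn_neg_log_add_inv (hpos b hb i) (hpos a ha i) ?_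
  nlinarith [hP.eigenvalues_pos i]
end

section
/- Let P be a symmetric positive definite n×n real matrix with maximal eigenvalue λ. Then γ(θ) = -log det(I - θP) + tr((I - θP)^{-1} - I) tends to +∞ as θ → (1/λ)⁻. -/
/-!
Diagonalising `P`, `γ(θ) = ∑ᵢ φ(1 - θ μᵢ)` over the eigenvalues `μᵢ` of `P`, where
`φ(x) = -log x + (x⁻¹ - 1)`. For `0 < θ < 1/λ` every `1 - θ μᵢ` lies in `(0, 1]`, where `φ ≥ 0`,
so `γ(θ) ≥ φ(1 - θ λ)`; and `φ(x) → +∞` as `x → 0⁺`.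
-/

open Filter Topology Unitary

namespace Matrix

variable {ι : Type*} [Fintype ι] [DecidableEq ι]

lemma det_conjStarAlgAut {R : Type*} [CommRing R] [StarRing R] (u : unitary (Matrix ι ι R))
    (M : Matrix ι ι R) : (conjStarAlgAut R _ u M).det = M.det := by
  rw [conjStarAlgAut_apply, det_mul, det_mul, mul_comm, ← mul_assoc, ← det_mul,
    coe_star_mul_self, det_one, one_mul]

lemma trace_conjStarAlgAut {R : Type*} [CommRing R] [StarRing R] (u : unitary (Matrix ι ι R))
    (M : Matrix ι ι R) : (conjStarAlgAut R _ u M).trace = M.trace := by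
  rw [conjStarAlgAut_apply, trace_mul_cycle, coe_star_mul_self, one_mul]

namespace IsHermitian

variable {A : Matrix ι ι ℝ} (hA : A.IsHermitian)
include hA

lemma one_sub_smul_eq_conjStarAlgAut (θ : ℝ) :
    1 - θ • A = conjStarAlgAut ℝ _ hA.eigenvectorUnitary
      (diagonal fun i => 1 - θ * hA.eigenvalues i) := by
  conv_lhs => rw [hA.spectral_theorem]
  rw [← map_smul, ← map_one (conjStarAlgAut ℝ _ hA.eigenvectorUnitary), ← map_sub]
  congr 1
  ext i j
  by_cases h : i = j <;> simp [h]

lemma det_one_sub_smul (θ : ℝ) :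
    (1 - θ • A).det = ∏ i, (1 - θ * hA.eigenvalues i) := by
  rw [hA.one_sub_smul_eq_conjStarAlgAut, det_conjStarAlgAut, det_diagonal]

lemma trace_inv_one_sub_smul {θ : ℝ} (hθ : ∀ i, 1 - θ * hA.eigenvalues i ≠ 0) :
    (1 - θ • A)⁻¹.trace = ∑ i, (1 - θ * hA.eigenvalues i)⁻¹ := by
  have hinv : (1 - θ • A)⁻¹ = conjStarAlgAut ℝ _ hA.eigenvectorUnitary
      (diagonal fun i => (1 - θ * hA.eigenvalues i)⁻¹) := by
    refine inv_eq_right_inv ?_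
    rw [hA.one_sub_smul_eq_conjStarAlgAut, ← map_mul, diagonal_mul_diagonal]
    simp [mul_inv_cancel₀ (hθ _)]
  rw [hinv, trace_conjStarAlgAut, trace_diagonal]

lemma neg_log_det_add_trace_eq_sum {θ : ℝ} (hθ : ∀ i, 1 - θ * hA.eigenvalues i ≠ 0) :
    -Real.log (1 - θ • A).det + ((1 - θ • A)⁻¹ - 1).trace =
      ∑ i, (-Real.log (1 - θ * hA.eigenvalues i) + ((1 - θ * hA.eigenvalues i)⁻¹ - 1)) := by
  rw [hA.det_one_sub_smul, Real.log_prod fun i _ => hθ i, trace_sub,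
    hA.trace_inv_one_sub_smul hθ, trace_one, Finset.sum_add_distrib, Finset.sum_sub_distrib,
    Finset.sum_neg_distrib, Finset.sum_const, Finset.card_univ, nsmul_one]

end IsHermitian

end Matrix

lemma neg_log_add_inv_sub_one_nonneg {x : ℝ} (h0 : 0 < x) (h1 : x ≤ 1) :
    0 ≤ -Real.log x + (x⁻¹ - 1) := by
  have := Real.log_nonpos h0.le h1
  have := (one_le_inv₀ h0).mpr h1
  linarith

lemma tendsto_neg_log_add_inv_sub_one_nhdsGT_zero :
    Tendsto (fun x : ℝ => -Real.log x + (x⁻¹ - 1)) (𝓝[>] 0) atTop :=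
  (tendsto_neg_atTop_iff.mpr Real.tendsto_log_nhdsGT_zero).atTop_add_atTop
    (tendsto_atTop_add_const_right _ _ tendsto_inv_nhdsGT_zero)

lemma tendsto_one_sub_mul_nhdsLT_one_div {c : ℝ} (hc : 0 < c) :
    Tendsto (fun θ : ℝ => 1 - θ * c) (𝓝[<] (1 / c)) (𝓝[>] 0) := by
  refine tendsto_nhdsWithin_iff.mpr ⟨?_, ?_⟩
  · have : Tendsto (fun θ : ℝ => 1 - θ * c) (𝓝 (1 / c)) (𝓝 (1 - 1 / c * c)) :=
      (continuous_const.sub (continuous_id.mul continuous_const)).tendsto _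
    rw [one_div_mul_cancel hc.ne', sub_self] at this
    exact this.mono_left nhdsWithin_le_nhds
  · filter_upwards [self_mem_nhdsWithin] with θ (hθ : θ < 1 / c)
    simpa using (lt_div_iff₀ hc).mp hθ

/-- γ(θ) = -log det(I - θP) + tr((I - θP)⁻¹ - I) tends to +∞ as θ → (1/λ)⁻. -/
theorem stmt_3 {n : ℕ} (P : Matrix (Fin n) (Fin n) ℝ) (hP : P.PosDef)
    (lam : ℝ) (hlam : IsGreatest (Set.range hP.1.eigenvalues) lam) :
    Filter.Tendsto
      (fun θ : ℝ => -Real.log ((1 - θ • P).det) + Matrix.trace ((1 - θ • P)⁻¹ - 1))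
      (nhdsWithin (1 / lam) (Set.Iio (1 / lam))) Filter.atTop := by
  obtain ⟨⟨i₀, rfl⟩, hmax⟩ := hlam
  set μ := hP.1.eigenvalues
  have hμ₀ : 0 < μ i₀ := hP.eigenvalues_pos i₀
  refine tendsto_atTop_mono' _ ?_
    (tendsto_neg_log_add_inv_sub_one_nhdsGT_zero.comp (tendsto_one_sub_mul_nhdsLT_one_div hμ₀))
  filter_upwards [Ioo_mem_nhdsLT (one_div_pos.mpr hμ₀)] with θ ⟨hθ₀, hθ⟩
  have hθμ₀ : θ * μ i₀ < 1 := (lt_div_iff₀ hμ₀).mp hθ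
  have hfactor : ∀ i, 0 < 1 - θ * μ i ∧ 1 - θ * μ i ≤ 1 := fun i => by
    have := hmax ⟨i, rfl⟩
    have := hP.eigenvalues_pos i
    constructor <;> nlinarith
  rw [hP.1.neg_log_det_add_trace_eq_sum fun i => (hfactor i).1.ne']
  exact Finset.single_le_sum
    (fun i _ => neg_log_add_inv_sub_one_nonneg (hfactor i).1 (hfactor i).2) (Finset.mem_univ i₀)
end

section
/- Let A ∈ ℝ^{n×n}, B ∈ ℝ^{n×q}, C ∈ ℝ^{p×n}, D ∈ ℝ^{p×m}, G ∈ ℝ^{n×m}, J ∈ ℝ^{q×p}, and let V be symmetric positive semidefinite with S := C V Cᵀ + D Dᵀ ≻ 0 and G Dᵀ = 0. Set Ã = A + B J C, G̃ = G + B J D. Then Ã V Ãᵀ + G̃ G̃ᵀ - (Ã V Cᵀ + G̃ Dᵀ) S^{-1} (Ã V Cᵀ + G̃ Dᵀ)ᵀ = A V Aᵀ + G Gᵀ - A V Cᵀ S^{-1} C V Aᵀ. -/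
open Matrix

/-- Feedback invariance of the Riccati covariance update: with Ã = A + BJC,
G̃ = G + BJD, S = C V Cᵀ + D Dᵀ ≻ 0 and G Dᵀ = 0,
Ã V Ãᵀ + G̃ G̃ᵀ - (Ã V Cᵀ + G̃ Dᵀ) S⁻¹ (Ã V Cᵀ + G̃ Dᵀ)ᵀ
  = A V Aᵀ + G Gᵀ - A V Cᵀ S⁻¹ C V Aᵀ. -/
theorem stmt_17 {n p q m : ℕ}
    (A : Matrix (Fin n) (Fin n) ℝ) (B : Matrix (Fin n) (Fin q) ℝ)
    (C : Matrix (Fin p) (Fin n) ℝ) (D : Matrix (Fin p) (Fin m) ℝ)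
    (G : Matrix (Fin n) (Fin m) ℝ) (J : Matrix (Fin q) (Fin p) ℝ)
    (V : Matrix (Fin n) (Fin n) ℝ) (hV : V.PosSemidef)
    (hS : (C * V * Cᵀ + D * Dᵀ).PosDef) (hGD : G * Dᵀ = 0) :
    (A + B * J * C) * V * (A + B * J * C)ᵀ + (G + B * J * D) * (G + B * J * D)ᵀ
      - ((A + B * J * C) * V * Cᵀ + (G + B * J * D) * Dᵀ)
          * (C * V * Cᵀ + D * Dᵀ)⁻¹
          * ((A + B * J * C) * V * Cᵀ + (G + B * J * D) * Dᵀ)ᵀ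
      = A * V * Aᵀ + G * Gᵀ - A * V * Cᵀ * (C * V * Cᵀ + D * Dᵀ)⁻¹ * (C * V * Aᵀ) := by
  set S := C * V * Cᵀ + D * Dᵀ with hSdef
  have hVt : Vᵀ = V := hV.1
  have hSt : Sᵀ = S := hS.1
  have hdet : IsUnit S.det := isUnit_iff_ne_zero.mpr (ne_of_gt hS.det_pos)
  have hinv : S * S⁻¹ = 1 := Matrix.mul_nonsing_inv S hdet
  have hinv' : S⁻¹ * S = 1 := Matrix.nonsing_inv_mul S hdet
  have hDG : D * Gᵀ = 0 := by
    have := congrArg Matrix.transpose hGD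
    simpa [Matrix.transpose_mul] using this
  have hM : (A + B * J * C) * V * Cᵀ + (G + B * J * D) * Dᵀ
      = A * V * Cᵀ + B * J * S := by
    simp only [hSdef, Matrix.add_mul, Matrix.mul_add, hGD, Matrix.mul_assoc]
    abel
  have hMt : ((A + B * J * C) * V * Cᵀ + (G + B * J * D) * Dᵀ)ᵀ
      = C * V * Aᵀ + S * Jᵀ * Bᵀ := by
    rw [hM]
    simp [Matrix.transpose_add, Matrix.transpose_mul, hVt, hSt, Matrix.mul_assoc]
  rw [hMt, hM]
  have hprod : (A * V * Cᵀ + B * J * S) * S⁻¹ * (C * V * Aᵀ + S * Jᵀ * Bᵀ)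
      = A * V * (Cᵀ * (S⁻¹ * (C * (V * Aᵀ)))) + A * V * (Cᵀ * (Jᵀ * Bᵀ))
        + B * (J * (C * (V * Aᵀ))) + B * (J * (S * (Jᵀ * Bᵀ))) := by
    simp only [Matrix.add_mul, Matrix.mul_add, Matrix.mul_assoc]
    rw [show S⁻¹ * (S * (Jᵀ * Bᵀ)) = (S⁻¹ * S) * (Jᵀ * Bᵀ) by rw [Matrix.mul_assoc],
      hinv', Matrix.one_mul,
      show S * (S⁻¹ * (C * (V * Aᵀ))) = S * S⁻¹ * (C * (V * Aᵀ)) from (Matrix.mul_assoc _ _ _).symm,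
      hinv, Matrix.one_mul]
    abel
  rw [hprod]
  have hexp : (A + B * J * C) * V * (A + B * J * C)ᵀ + (G + B * J * D) * (G + B * J * D)ᵀ
      = A * V * Aᵀ + G * Gᵀ + A * V * (Cᵀ * (Jᵀ * Bᵀ)) + B * (J * (C * (V * Aᵀ)))
        + B * (J * (S * (Jᵀ * Bᵀ))) := by
    have e3 : G * (Dᵀ * (Jᵀ * Bᵀ)) = 0 := by
      rw [← Matrix.mul_assoc, hGD, Matrix.zero_mul]
    have e4 : B * (J * (D * Gᵀ)) = 0 := by
      rw [hDG, Matrix.mul_zero, Matrix.mul_zero]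
    simp only [hSdef, Matrix.transpose_add, Matrix.transpose_mul, hVt,
      Matrix.mul_add, Matrix.add_mul, Matrix.mul_assoc, e3, e4, add_zero, zero_add]
    abel
  rw [hexp]
  have goal_eq : A * V * Aᵀ = A * V * Aᵀ := rfl
  simp only [Matrix.mul_assoc]
  abel
end
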